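/- arXiv:1703.05252 — 2 statements merged into one kernel-verified Lean document; each statement's English description precedes it below -/
import Mathlib

section
/- Let t ≥ 2, let H be a t-uniform hypergraph on a finite vertex set U, and let x be any legal weighting. Then w(x,H) ≤ (1/t) · ∑_{u∈U} x(u)(1−x(u))^{t−1} · λ(H(u)), where H(u) denotes the link hypergraph of u. -/
/-- A legal weighting: nonnegative weights summing to 1. -/
def IsLegalWeighting {U : Type*} [Fintype U] (x : U → ℝ) : Prop :=
  (∀ u, 0 ≤ x u) ∧ ∑ u, x u = 1

/-- The weight polynomial of a hypergraph evaluated at a weighting. -/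
def weightPoly {U : Type*} [Fintype U] (H : Finset (Finset U)) (x : U → ℝ) : ℝ :=
  ∑ e ∈ H, ∏ u ∈ e, x u

/-- The Lagrangian of a hypergraph. -/
noncomputable def lagrangian {U : Type*} [Fintype U] (H : Finset (Finset U)) : ℝ :=
  sSup {w | ∃ x, IsLegalWeighting x ∧ weightPoly H x = w}

/-- The link hypergraph of a vertex `u`: the `(t-1)`-uniform hypergraph whose edges are
the sets `e'` with `e' ∪ {u} ∈ H`. -/
def linkHypergraph {U : Type*} [Fintype U] [DecidableEq U]
    (H : Finset (Finset U)) (u : U) : Finset (Finset U) :=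
  (H.filter fun e => u ∈ e).image fun e => e.erase u

/-! Counting each edge once per vertex gives `t · w(x, H) = ∑ᵤ x(u) · w(x, H(u))`. Since `u` lies in
no edge of `H(u)`, the weight `w(x, H(u))` only sees the restriction of `x` to `U \ {u}`, which is
`1 - x(u)` times a legal weighting; as `H(u)` is `(t-1)`-uniform, homogeneity gives
`w(x, H(u)) ≤ (1 - x(u))^(t-1) λ(H(u))`. -/

open Finset

section Lagrangian

variable {U : Type*} [Fintype U]

lemma IsLegalWeighting.le_one {x : U → ℝ} (hx : IsLegalWeighting x) (u : U) : x u ≤ 1 :=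
  hx.2 ▸ single_le_sum (fun v _ => hx.1 v) (mem_univ u)

lemma weightPoly_le_lagrangian (H : Finset (Finset U)) {x : U → ℝ} (hx : IsLegalWeighting x) :
    weightPoly H x ≤ lagrangian H := by
  refine le_csSup ⟨#H, ?_⟩ ⟨x, hx, rfl⟩
  rintro _ ⟨y, hy, rfl⟩
  calc weightPoly H y ≤ ∑ _e ∈ H, (1 : ℝ) :=
        sum_le_sum fun e _ => prod_le_one (fun v _ => hy.1 v) fun v _ => hy.le_one v
    _ = #H := by simp

lemma weightPoly_smul {k : ℕ} {H : Finset (Finset U)} (hH : ∀ e ∈ H, #e = k) (c : ℝ)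
    (y : U → ℝ) : weightPoly H (c • y) = c ^ k * weightPoly H y := by
  simp only [weightPoly, mul_sum, Pi.smul_apply, smul_eq_mul, prod_mul_distrib, prod_const]
  exact sum_congr rfl fun e he => by rw [hH e he]

/-- When the total weight is `0` the normalized weighting is arbitrary; `u` supplies one. -/
lemma exists_isLegalWeighting_smul_eq (u : U) {x : U → ℝ} (hx : ∀ v, 0 ≤ x v) :
    ∃ y, IsLegalWeighting y ∧ x = (∑ v, x v) • y := by
  classical
  rcases (sum_nonneg fun v _ => hx v).eq_or_lt with hc | hc
  · refine ⟨Pi.single u 1, ⟨fun v => ?_, by simp⟩, ?_⟩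
    · by_cases hv : v = u <;> simp [hv]
    · rw [← hc, zero_smul]
      exact funext fun v => (sum_eq_zero_iff_of_nonneg fun w _ => hx w).1 hc.symm v (mem_univ v)
  · refine ⟨(∑ v, x v)⁻¹ • x, ⟨fun v => ?_, ?_⟩, ?_⟩
    · exact mul_nonneg (inv_nonneg.2 hc.le) (hx v)
    · simp only [Pi.smul_apply, smul_eq_mul, ← mul_sum, inv_mul_cancel₀ hc.ne']
    · rw [smul_smul, mul_inv_cancel₀ hc.ne', one_smul]

lemma weightPoly_le_sum_pow_mul_lagrangian (u : U) {k : ℕ} {H : Finset (Finset U)}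
    (hH : ∀ e ∈ H, #e = k) {x : U → ℝ} (hx : ∀ v, 0 ≤ x v) :
    weightPoly H x ≤ (∑ v, x v) ^ k * lagrangian H := by
  obtain ⟨y, hy, hxy⟩ := exists_isLegalWeighting_smul_eq u hx
  rw [hxy, weightPoly_smul hH, ← hxy]
  exact mul_le_mul_of_nonneg_left (weightPoly_le_lagrangian H hy)
    (pow_nonneg (sum_nonneg fun v _ => hx v) k)

lemma weightPoly_update_of_forall_notMem [DecidableEq U] {H : Finset (Finset U)} {u : U}
    (hH : ∀ e ∈ H, u ∉ e) (x : U → ℝ) (a : ℝ) :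
    weightPoly H (Function.update x u a) = weightPoly H x :=
  sum_congr rfl fun e he => prod_congr rfl fun _ hv =>
    Function.update_of_ne (ne_of_mem_of_not_mem hv (hH e he)) a x

end Lagrangian

section Link

variable {U : Type*} [Fintype U] [DecidableEq U] {H : Finset (Finset U)} {u : U}

lemma exists_eq_erase_of_mem_linkHypergraph {e' : Finset U} (he' : e' ∈ linkHypergraph H u) :
    ∃ e ∈ H, u ∈ e ∧ e.erase u = e' := by
  simpa [linkHypergraph, and_assoc] using he'

lemma notMem_of_mem_linkHypergraph {e' : Finset U} (he' : e' ∈ linkHypergraph H u) : u ∉ e' := by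
  obtain ⟨e, -, -, rfl⟩ := exists_eq_erase_of_mem_linkHypergraph he'
  exact notMem_erase u e

lemma card_of_mem_linkHypergraph {t : ℕ} (hH : ∀ e ∈ H, #e = t) {e' : Finset U}
    (he' : e' ∈ linkHypergraph H u) : #e' = t - 1 := by
  obtain ⟨e, heH, hue, rfl⟩ := exists_eq_erase_of_mem_linkHypergraph he'
  rw [card_erase_of_mem hue, hH e heH]

lemma mul_weightPoly_linkHypergraph (H : Finset (Finset U)) (u : U) (x : U → ℝ) :
    x u * weightPoly (linkHypergraph H u) x = ∑ e ∈ H with u ∈ e, ∏ v ∈ e, x v := by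
  have herase : Set.InjOn (fun e : Finset U => e.erase u) ↑{e ∈ H | u ∈ e} := by
    intro e₁ h₁ e₂ h₂ h
    rw [← insert_erase (mem_filter.1 h₁).2, ← insert_erase (mem_filter.1 h₂).2]
    exact congrArg (insert u) h
  rw [weightPoly, linkHypergraph, sum_image herase, mul_sum]
  exact sum_congr rfl fun e he => mul_prod_erase e x (mem_filter.1 he).2

lemma sum_mul_weightPoly_linkHypergraph {t : ℕ} (hH : ∀ e ∈ H, #e = t) (x : U → ℝ) :
    ∑ u, x u * weightPoly (linkHypergraph H u) x = t * weightPoly H x := by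
  simp_rw [mul_weightPoly_linkHypergraph, sum_filter]
  rw [sum_comm, weightPoly, mul_sum]
  refine sum_congr rfl fun e he => ?_
  rw [sum_ite_mem, univ_inter, sum_const, nsmul_eq_mul, hH e he]

lemma weightPoly_linkHypergraph_le {t : ℕ} (hH : ∀ e ∈ H, #e = t) {x : U → ℝ}
    (hx : IsLegalWeighting x) (u : U) :
    weightPoly (linkHypergraph H u) x ≤ (1 - x u) ^ (t - 1) * lagrangian (linkHypergraph H u) := by
  have hsum : ∑ v, Function.update x u 0 v = 1 - x u := by
    rw [sum_update_of_mem (mem_univ u), ← hx.2, ← add_sum_erase univ x (mem_univ u),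
      sdiff_singleton_eq_erase]
    ring
  have hnonneg : ∀ v, 0 ≤ Function.update x u 0 v := by
    intro v
    by_cases hv : v = u
    · simp [hv]
    · simpa [hv] using hx.1 v
  rw [← weightPoly_update_of_forall_notMem (fun _ => notMem_of_mem_linkHypergraph) x 0, ← hsum]
  exact weightPoly_le_sum_pow_mul_lagrangian u (fun _ => card_of_mem_linkHypergraph hH) hnonneg

end Link

/-- The weight polynomial is bounded via the Lagrangians of the links. -/
theorem weightPoly_le_link_lagrangian {U : Type*} [Fintype U] [DecidableEq U]
    (t : ℕ) (ht : 2 ≤ t)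
    (H : Finset (Finset U)) (hH : ∀ e ∈ H, e.card = t)
    (x : U → ℝ) (hx : IsLegalWeighting x) :
    weightPoly H x ≤
      (1 / t) * ∑ u, x u * (1 - x u) ^ (t - 1) * lagrangian (linkHypergraph H u) := by
  have ht0 : (0 : ℝ) < t := by exact_mod_cast (by omega : 0 < t)
  calc weightPoly H x = (1 / t) * ∑ u, x u * weightPoly (linkHypergraph H u) x := by
        rw [sum_mul_weightPoly_linkHypergraph hH, one_div, inv_mul_cancel_left₀ ht0.ne']
    _ ≤ (1 / t) * ∑ u, x u * (1 - x u) ^ (t - 1) * lagrangian (linkHypergraph H u) := by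
        refine mul_le_mul_of_nonneg_left (sum_le_sum fun u _ => ?_) (by positivity)
        rw [mul_assoc]
        exact mul_le_mul_of_nonneg_left (weightPoly_linkHypergraph_le hH hx u) (hx.1 u)
end

section
/- For the hypergraph H_{t,v} (t ≥ 2), the link of any vertex y of positive degree is isomorphic to the v-fold tensor power of H_{t−1,v}: H_{t,v}(y) ≅ H_{t−1,v}^{⊗v}. -/
open Classical in
/-- The hypergraph `H_{t,v}`: vertices are vectors in `[v]^{v^t}` and edges are the
`t`-sets of vectors forming the columns of a `v^t × t` matrix whose rows consist of all
elements of `[v]^t`. -/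
noncomputable def Htv (t v : ℕ) : Finset (Finset (Fin (v ^ t) → Fin v)) :=
  Finset.univ.filter fun e => e.card = t ∧
    ∀ g : (Fin (v ^ t) → Fin v) → Fin v, ∃ r : Fin (v ^ t), ∀ y ∈ e, y r = g y

lemma htv_card {t v : ℕ} {e : Finset (Fin (v ^ t) → Fin v)} (he : e ∈ Htv t v) :
    e.card = t := ((Finset.mem_filter.1 he).2).1

lemma htv_surj {t v : ℕ} {e : Finset (Fin (v ^ t) → Fin v)} (he : e ∈ Htv t v) :
    ∀ g : (Fin (v ^ t) → Fin v) → Fin v, ∃ r : Fin (v ^ t), ∀ y ∈ e, y r = g y :=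
  ((Finset.mem_filter.1 he).2).2

open Classical in
lemma htv_mem {t v : ℕ} {e : Finset (Fin (v ^ t) → Fin v)} (hc : e.card = t)
    (hs : ∀ g : (Fin (v ^ t) → Fin v) → Fin v, ∃ r : Fin (v ^ t), ∀ y ∈ e, y r = g y) :
    e ∈ Htv t v := Finset.mem_filter.2 ⟨Finset.mem_univ _, hc, hs⟩

lemma fiber_card {t v : ℕ} {e : Finset (Fin (v ^ t) → Fin v)} (he : e ∈ Htv t v)
    {y : Fin (v ^ t) → Fin v} (hy : y ∈ e) (a : Fin v) :
    Fintype.card {r : Fin (v ^ t) // y r = a} = v ^ (t - 1) := by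
  classical
  set S := {x // x ∈ e}
  set Φ : Fin (v ^ t) → (S → Fin v) := fun r x => x.1 r with hΦ
  have hsurj : Function.Surjective Φ := by
    intro h
    obtain ⟨r, hr⟩ := htv_surj he (fun z => if hz : z ∈ e then h ⟨z, hz⟩ else h ⟨y, hy⟩)
    refine ⟨r, funext fun x => ?_⟩
    have := hr x.1 x.2
    rwa [dif_pos x.2] at this
  have hcards : Fintype.card (Fin (v ^ t)) = Fintype.card (S → Fin v) := by
    simp [Fintype.card_fun, Fintype.card_coe, htv_card he, S]
  have hbij : Function.Bijective Φ :=
    (Fintype.bijective_iff_surjective_and_card Φ).2 ⟨hsurj, hcards⟩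
  let E := Equiv.ofBijective Φ hbij
  have e1 : {r : Fin (v ^ t) // y r = a} ≃ {h : S → Fin v // h ⟨y, hy⟩ = a} :=
    E.subtypeEquiv fun r => Iff.rfl
  have e2 : {h : S → Fin v // h ⟨y, hy⟩ = a} ≃ ({x : S // x ≠ ⟨y, hy⟩} → Fin v) :=
    { toFun := fun h x => h.1 x.1
      invFun := fun k => ⟨fun x => if hx : x = ⟨y, hy⟩ then a else k ⟨x, hx⟩, by simp⟩
      left_inv := fun h => by
        apply Subtype.ext; funext x
        dsimp only
        by_cases hx : x = (⟨y, hy⟩ : S)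
        · rw [dif_pos hx, hx, h.2]
        · rw [dif_neg hx]
      right_inv := fun k => by
        funext x
        dsimp only
        rw [dif_neg x.2] }
  rw [Fintype.card_congr (e1.trans e2), Fintype.card_fun]
  congr 1
  · simp [Fintype.card_fin]
  have : Fintype.card {x : S // x ≠ ⟨y, hy⟩} = Fintype.card S - 1 := by
    rw [Fintype.card_subtype_compl, Fintype.card_subtype_eq]
  rw [this, Fintype.card_coe, htv_card he]

/-- The `v`-fold tensor power of a hypergraph `H`. -/
def tensorPow {U : Type*} [Fintype U] [DecidableEq U]
    (H : Finset (Finset U)) (v : ℕ) : Finset (Finset (Fin v → U)) :=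
  Finset.univ.filter fun e => ∀ ℓ : Fin v,
    (e.image fun f => f ℓ) ∈ H ∧ ∀ f ∈ e, ∀ g ∈ e, f ℓ = g ℓ → f = g

lemma mem_tensorPow {U : Type*} [Fintype U] [DecidableEq U]
    {H : Finset (Finset U)} {v : ℕ} {e : Finset (Fin v → U)} :
    e ∈ tensorPow H v ↔ ∀ ℓ : Fin v,
      (e.image fun f => f ℓ) ∈ H ∧ ∀ f ∈ e, ∀ g ∈ e, f ℓ = g ℓ → f = g := by
  simp [tensorPow]

/-- For `t ≥ 2`, the link in `H_{t,v}` of any vertex `y` of positive degree is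
isomorphic to the `v`-fold tensor power of `H_{t-1,v}`: there is an injection of the
vertices inducing a bijection between the edge sets. -/
theorem link_Htv_iso_tensorPow (t v : ℕ) (ht : 2 ≤ t)
    (y : Fin (v ^ t) → Fin v) (hy : ∃ e ∈ Htv t v, y ∈ e) :
    ∃ φ : (Fin (v ^ t) → Fin v) → (Fin v → (Fin (v ^ (t - 1)) → Fin v)),
      Function.Injective φ ∧
      (∀ e : Finset (Fin (v ^ t) → Fin v),
        e ∈ linkHypergraph (Htv t v) y ↔ e.image φ ∈ tensorPow (Htv (t - 1) v) v) ∧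
      (∀ e' ∈ tensorPow (Htv (t - 1) v) v,
        ∃ e ∈ linkHypergraph (Htv t v) y, e.image φ = e') := by
  classical
  obtain ⟨e₀, he₀, hye₀⟩ := hy
  have hv : 1 < v := by
    have hc : 1 < e₀.card := by rw [htv_card he₀]; omega
    obtain ⟨x₁, hx₁, hx₁y⟩ := Finset.exists_mem_ne hc y
    have hex : ∃ r, x₁ r ≠ y r := by
      by_contra h
      push_neg at h
      exact hx₁y (funext h)
    obtain ⟨r, hr⟩ := hex
    have h1 : 1 < Fintype.card (Fin v) := Fintype.one_lt_card_iff.2 ⟨_, _, hr⟩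
    simpa using h1
  have hfib := fun a => fiber_card he₀ hye₀ a
  have β : ∀ a : Fin v, Fin (v ^ (t - 1)) ≃ {r : Fin (v ^ t) // y r = a} :=
    fun a => (Fintype.equivFinOfCardEq (hfib a)).symm
  set φ : (Fin (v ^ t) → Fin v) → (Fin v → (Fin (v ^ (t - 1)) → Fin v)) :=
    fun x a s => x (β a s) with hφ
  set ψ : (Fin v → (Fin (v ^ (t - 1)) → Fin v)) → (Fin (v ^ t) → Fin v) :=
    fun f r => f (y r) ((β (y r)).symm ⟨r, rfl⟩) with hψ
  have hψφ : ∀ x, ψ (φ x) = x := by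
    intro x; funext r
    simp only [hφ, hψ]
    rw [Equiv.apply_symm_apply]
  have key : ∀ (a : Fin v) (z : {r : Fin (v ^ t) // y r = a})
      (f : Fin v → Fin (v ^ (t - 1)) → Fin v),
      f (y z.1) ((β (y z.1)).symm ⟨z.1, rfl⟩) = f a ((β a).symm z) := by
    intro a z f
    obtain ⟨d, hd⟩ := z
    subst hd
    rfl
  have hφψ : ∀ f, φ (ψ f) = f := by
    intro f; funext a s
    simp only [hφ, hψ]
    rw [key a (β a s) f, Equiv.symm_apply_apply]
  have φinj : Function.Injective φ := fun x₁ x₂ h => by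
    rw [← hψφ x₁, ← hψφ x₂, h]
  have hsep : ∀ E ∈ Htv t v, y ∈ E → ∀ x ∈ E, ∀ x' ∈ E, x ≠ y → x' ≠ y → x ≠ x' →
      ∀ a : Fin v, ∃ r, y r = a ∧ x r ≠ x' r := by
    intro E hE hyE x hx x' hx' hxy hx'y hxx' a
    obtain ⟨r, hr⟩ := htv_surj hE
      (fun z => if z = y then a else if z = x then ⟨0, by omega⟩ else ⟨1, by omega⟩)
    have h1 := hr x hx
    have h2 := hr x' hx'
    have hy1 := hr y hyE
    rw [if_pos rfl] at hy1
    rw [if_neg hxy, if_pos rfl] at h1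
    rw [if_neg hx'y, if_neg (Ne.symm hxx')] at h2
    refine ⟨r, hy1, ?_⟩
    rw [h1, h2]
    simp [Fin.ext_iff]
  have hev : ∀ (x : Fin (v ^ t) → Fin v) (a : Fin v) (r : Fin (v ^ t)) (hr : y r = a),
      φ x a ((β a).symm ⟨r, hr⟩) = x r := by
    intro x a r hr
    simp only [hφ]
    rw [Equiv.apply_symm_apply]
  have hcia : ∀ E ∈ Htv t v, y ∈ E → ∀ a : Fin v, ∀ x ∈ E.erase y, ∀ x' ∈ E.erase y,
      φ x a = φ x' a → x = x' := by
    intro E hE hyE a x hx x' hx' hEq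
    by_contra hne
    obtain ⟨r, hyr, hxr⟩ := hsep E hE hyE x (Finset.mem_of_mem_erase hx) x'
      (Finset.mem_of_mem_erase hx') (Finset.ne_of_mem_erase hx)
      (Finset.ne_of_mem_erase hx') hne a
    apply hxr
    rw [← hev x a r hyr, ← hev x' a r hyr, hEq]
  have hiff : ∀ e : Finset (Fin (v ^ t) → Fin v),
      e ∈ linkHypergraph (Htv t v) y ↔ e.image φ ∈ tensorPow (Htv (t - 1) v) v := by
    intro e
    constructor
    · intro he
      obtain ⟨E, hE, hEe⟩ := Finset.mem_image.1 he
      rw [Finset.mem_filter] at hE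
      obtain ⟨hE, hyE⟩ := hE
      subst hEe
      refine mem_tensorPow.2 fun a => ⟨?_, ?_⟩
      · rw [Finset.image_image]
        apply htv_mem
        · show (Finset.image (fun x => φ x a) (E.erase y)).card = t - 1
          rw [Finset.card_image_of_injOn (fun x hx x' hx' h => hcia E hE hyE a x hx x' hx' h),
            Finset.card_erase_of_mem hyE, htv_card hE]
        · intro g'
          obtain ⟨r, hr⟩ := htv_surj hE (fun z => if z = y then a else g' (φ z a))
          have hyr : y r = a := by simpa using hr y hyE
          refine ⟨(β a).symm ⟨r, hyr⟩, ?_⟩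
          intro z hz
          obtain ⟨x, hx, rfl⟩ := Finset.mem_image.1 hz
          have hxr := hr x (Finset.mem_of_mem_erase hx)
          rw [if_neg (Finset.ne_of_mem_erase hx)] at hxr
          calc ((fun f => f a) ∘ φ) x ((β a).symm ⟨r, hyr⟩) = x r := hev x a r hyr
            _ = g' (((fun f => f a) ∘ φ) x) := hxr
      · intro f hf g hg hfg
        obtain ⟨x, hx, rfl⟩ := Finset.mem_image.1 hf
        obtain ⟨x', hx', rfl⟩ := Finset.mem_image.1 hg
        rw [hcia E hE hyE a x hx x' hx' hfg]
    · intro he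
      have hT := mem_tensorPow.1 he
      obtain ⟨a0, ha0⟩ : ∃ a : Fin v, (a : ℕ) = 0 := ⟨⟨0, by omega⟩, rfl⟩
      have hyne : y ∉ e := by
        intro hye
        obtain ⟨s, hs⟩ := htv_surj (hT a0).1 (fun _ => ⟨1, by omega⟩)
        have hmem : φ y a0 ∈ (e.image φ).image (fun f => f a0) :=
          Finset.mem_image_of_mem _ (Finset.mem_image_of_mem φ hye)
        have h1 := hs (φ y a0) hmem
        have h2 : φ y (a0 : Fin v) s = a0 := by
          simp only [hφ]
          exact (β a0 s).2
        rw [h2] at h1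
        simp [Fin.ext_iff, ha0] at h1
      have hinj_e : ∀ a : Fin v, ∀ x ∈ e, ∀ x' ∈ e, φ x a = φ x' a → x = x' := by
        intro a x hx x' hx' hEq
        exact φinj ((hT a).2 (φ x) (Finset.mem_image_of_mem φ hx) (φ x')
          (Finset.mem_image_of_mem φ hx') hEq)
      have hcarde : e.card = t - 1 := by
        have h := htv_card (hT a0).1
        rw [Finset.image_image] at h
        have h2 : (e.image fun x => φ x a0).card = t - 1 := h
        rw [Finset.card_image_of_injOn
          (fun x hx x' hx' hh => hinj_e a0 x hx x' hx' hh)] at h2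
        exact h2
      refine Finset.mem_image.2 ⟨insert y e,
        Finset.mem_filter.2 ⟨?_, Finset.mem_insert_self y e⟩, Finset.erase_insert hyne⟩
      apply htv_mem
      · rw [Finset.card_insert_of_notMem hyne, hcarde]; omega
      · intro g
        obtain ⟨a, ha⟩ : ∃ a : Fin v, g y = a := ⟨g y, rfl⟩
        obtain ⟨s, hs⟩ := htv_surj (hT a).1
          (fun z => if h : ∃ x ∈ e, φ x a = z then g h.choose else g y)
        refine ⟨β a s, ?_⟩
        intro w hw
        rcases Finset.mem_insert.1 hw with rfl | hw
        · exact (β a s).2.trans ha.symm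
        · have hz : φ w a ∈ (e.image φ).image (fun f => f a) :=
            Finset.mem_image_of_mem _ (Finset.mem_image_of_mem φ hw)
          have h1 := hs (φ w a) hz
          have hexw : ∃ x ∈ e, φ x a = φ w a := ⟨w, hw, rfl⟩
          rw [dif_pos hexw] at h1
          obtain ⟨hc1, hc2⟩ := hexw.choose_spec
          rw [hinj_e a _ hc1 w hw hc2] at h1
          calc w ↑(β a s) = φ w a s := by simp only [hφ]
            _ = g w := h1
  refine ⟨φ, φinj, hiff, fun e' he' => ?_⟩
  have himg : (e'.image ψ).image φ = e' := by
    rw [Finset.image_image]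
    calc e'.image (φ ∘ ψ) = e'.image id := Finset.image_congr (fun f _ => hφψ f)
      _ = e' := Finset.image_id
  exact ⟨e'.image ψ, (hiff _).2 (by rw [himg]; exact he'), himg⟩
end
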